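/- Let A be a real n₁ × n₂ matrix with reduced SVD A = U Σ Vᵀ, define P_T as the projection onto the tangent space at A and P_T^⊥ = I − P_T. Then for any n₁ × n₂ matrix C with P_T(C) = 0 (i.e., C = P_T^⊥(C)), one has ‖A + C‖_* = ‖A‖_* + ‖C‖_*. -/

import Mathlib

open Matrix

theorem Matrix.isHermitian_transpose_mul_self {m n : Type*} [Fintype m] (A : Matrix m n ℝ) :
    (Aᵀ * A).IsHermitian := by
  simpa [conjTranspose_eq_transpose_of_trivial] using isHermitian_conjTranspose_mul_self A

noncomputable def singVals {m n : ℕ} (A : Matrix (Fin m) (Fin n) ℝ) : Fin n → ℝ :=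
  fun i => Real.sqrt ((Matrix.isHermitian_transpose_mul_self A).eigenvalues i)

noncomputable def nuclearNorm {m n : ℕ} (A : Matrix (Fin m) (Fin n) ℝ) : ℝ :=
  ∑ i, singVals A i

noncomputable def frobNorm {m n : ℕ} (A : Matrix (Fin m) (Fin n) ℝ) : ℝ :=
  Real.sqrt (∑ i, ∑ j, (A i j) ^ 2)


/-- Projection onto the tangent space of the set of low-rank matrices at a
matrix with reduced SVD given by column-orthonormal `U` and `V`. -/
def PT {n₁ n₂ r : ℕ} (U : Matrix (Fin n₁) (Fin r) ℝ) (V : Matrix (Fin n₂) (Fin r) ℝ)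
    (B : Matrix (Fin n₁) (Fin n₂) ℝ) : Matrix (Fin n₁) (Fin n₂) ℝ :=
  U * Uᵀ * B + B * (V * Vᵀ) - U * Uᵀ * B * (V * Vᵀ)

/-!
Orthogonality of the row spaces and of the column spaces gives `Aᵀ C = 0` and `A Cᵀ = 0`, so
`(A + C)ᵀ (A + C) = AᵀA + CᵀC`. Two positive semidefinite matrices with product zero have
square roots with product zero, hence `√(AᵀA + CᵀC) = √(AᵀA) + √(CᵀC)`, and the nuclear norm is
the trace of this square root.
-/

open scoped MatrixOrder ComplexOrder

namespace Matrix

theorem posSemidef_transpose_mul_self {m n : Type*} [Fintype m] [Finite n] (A : Matrix m n ℝ) :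
    (Aᵀ * A).PosSemidef := by
  simpa using posSemidef_conjTranspose_mul_self A

theorem mul_eq_zero_of_mul_self_mul_eq_zero {n k 𝕜 : Type*} [Fintype n] [RCLike 𝕜]
    {S : Matrix n n 𝕜} {M : Matrix n k 𝕜} (hS : S.IsHermitian) (h : S * S * M = 0) :
    S * M = 0 := by
  rw [← conjTranspose_mul_self_eq_zero, conjTranspose_mul, hS.eq, Matrix.mul_assoc,
    ← Matrix.mul_assoc S, h, Matrix.mul_zero]

variable {n 𝕜 : Type*} [Fintype n] [DecidableEq n] [RCLike 𝕜]

theorem IsHermitian.trace_cfc {A : Matrix n n 𝕜} (hA : A.IsHermitian) (f : ℝ → ℝ) :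
    (cfc f A).trace = ∑ i, (f (hA.eigenvalues i) : 𝕜) := by
  rw [hA.cfc_eq, IsHermitian.cfc, Unitary.conjStarAlgAut_apply, trace_mul_cycle,
    Unitary.coe_star_mul_self, one_mul, trace_diagonal]
  rfl

theorem cfcSqrt_add_of_mul_eq_zero {P Q : Matrix n n 𝕜} (hP : P.PosSemidef) (hQ : Q.PosSemidef)
    (hPQ : P * Q = 0) : CFC.sqrt (P + Q) = CFC.sqrt P + CFC.sqrt Q := by
  have hP' : (CFC.sqrt P).IsHermitian := (CFC.sqrt_nonneg P).posSemidef.isHermitian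
  have hQ' : (CFC.sqrt Q).IsHermitian := (CFC.sqrt_nonneg Q).posSemidef.isHermitian
  have h₁ : CFC.sqrt P * Q = 0 :=
    mul_eq_zero_of_mul_self_mul_eq_zero hP' (by rw [CFC.sqrt_mul_sqrt_self P hP.nonneg, hPQ])
  have h₂ : CFC.sqrt Q * CFC.sqrt P = 0 := by
    refine mul_eq_zero_of_mul_self_mul_eq_zero hQ' ?_
    rw [CFC.sqrt_mul_sqrt_self Q hQ.nonneg, ← hQ.isHermitian.eq, ← hP'.eq, ← conjTranspose_mul,
      h₁, conjTranspose_zero]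
  have h₃ : CFC.sqrt P * CFC.sqrt Q = 0 := by
    rw [← hP'.eq, ← hQ'.eq, ← conjTranspose_mul, h₂, conjTranspose_zero]
  refine CFC.sqrt_unique ?_ (add_nonneg (CFC.sqrt_nonneg P) (CFC.sqrt_nonneg Q))
  rw [add_mul, mul_add, mul_add, h₂, h₃, CFC.sqrt_mul_sqrt_self P hP.nonneg,
    CFC.sqrt_mul_sqrt_self Q hQ.nonneg, add_zero, zero_add]

end Matrix

theorem nuclearNorm_eq_trace_sqrt {m n : ℕ} (A : Matrix (Fin m) (Fin n) ℝ) :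
    nuclearNorm A = (CFC.sqrt (Aᵀ * A)).trace := by
  rw [CFC.sqrt_eq_real_sqrt _ (posSemidef_transpose_mul_self A).nonneg, cfcₙ_eq_cfc,
    (isHermitian_transpose_mul_self A).trace_cfc]
  rfl

theorem nuclearNorm_add_of_transpose_mul_eq_zero {m n : ℕ} {A C : Matrix (Fin m) (Fin n) ℝ}
    (hAC : Aᵀ * C = 0) (hACt : A * Cᵀ = 0) :
    nuclearNorm (A + C) = nuclearNorm A + nuclearNorm C := by
  have hCA : Cᵀ * A = 0 := by simpa using congrArg transpose hAC
  have hGram : (A + C)ᵀ * (A + C) = Aᵀ * A + Cᵀ * C := by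
    rw [transpose_add, Matrix.add_mul, Matrix.mul_add, Matrix.mul_add, hAC, hCA, add_zero, zero_add]
  have hGramMul : Aᵀ * A * (Cᵀ * C) = 0 := by
    rw [Matrix.mul_assoc, ← Matrix.mul_assoc A, hACt, Matrix.zero_mul, Matrix.mul_zero]
  rw [nuclearNorm_eq_trace_sqrt, nuclearNorm_eq_trace_sqrt A, nuclearNorm_eq_trace_sqrt C, hGram,
    cfcSqrt_add_of_mul_eq_zero (posSemidef_transpose_mul_self A)
      (posSemidef_transpose_mul_self C) hGramMul, trace_add]

section TangentSpace

variable {n₁ n₂ r : ℕ} {U : Matrix (Fin n₁) (Fin r) ℝ} {V : Matrix (Fin n₂) (Fin r) ℝ}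

theorem transpose_mul_PT (hU : Uᵀ * U = 1) (B : Matrix (Fin n₁) (Fin n₂) ℝ) :
    Uᵀ * PT U V B = Uᵀ * B := by
  simp only [PT, Matrix.mul_add, Matrix.mul_sub, ← Matrix.mul_assoc, hU, Matrix.one_mul,
    add_sub_cancel_right]

theorem PT_mul (hV : Vᵀ * V = 1) (B : Matrix (Fin n₁) (Fin n₂) ℝ) :
    PT U V B * V = B * V := by
  simp only [PT, Matrix.add_mul, Matrix.sub_mul, Matrix.mul_assoc, hV, Matrix.mul_one,
    add_sub_cancel_left]

end TangentSpace

theorem stmt14_general {n₁ n₂ r : ℕ} (A : Matrix (Fin n₁) (Fin n₂) ℝ)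
    (U : Matrix (Fin n₁) (Fin r) ℝ) (V : Matrix (Fin n₂) (Fin r) ℝ)
    (σ : Fin r → ℝ)
    (hU : Uᵀ * U = 1) (hV : Vᵀ * V = 1)
    (hA : A = U * Matrix.diagonal σ * Vᵀ)
    (C : Matrix (Fin n₁) (Fin n₂) ℝ) (hC : PT U V C = 0) :
    nuclearNorm (A + C) = nuclearNorm A + nuclearNorm C := by
  have hUC : Uᵀ * C = 0 := by rw [← transpose_mul_PT hU, hC, Matrix.mul_zero]
  have hCV : C * V = 0 := by rw [← PT_mul hV, hC, Matrix.zero_mul]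
  refine nuclearNorm_add_of_transpose_mul_eq_zero ?_ ?_
  · simp only [hA, transpose_mul, Matrix.mul_assoc, hUC, Matrix.mul_zero]
  · rw [hA, Matrix.mul_assoc, ← transpose_mul, hCV, transpose_zero, Matrix.mul_zero]

/-- Decomposability of the nuclear norm: if `P_T C = 0` then
`‖A + C‖_* = ‖A‖_* + ‖C‖_*`. -/
theorem stmt14 {n₁ n₂ r : ℕ} (A : Matrix (Fin n₁) (Fin n₂) ℝ)
    (U : Matrix (Fin n₁) (Fin r) ℝ) (V : Matrix (Fin n₂) (Fin r) ℝ)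
    (σ : Fin r → ℝ) (hσ : ∀ i, 0 < σ i)
    (hU : Uᵀ * U = 1) (hV : Vᵀ * V = 1)
    (hA : A = U * Matrix.diagonal σ * Vᵀ)
    (C : Matrix (Fin n₁) (Fin n₂) ℝ) (hC : PT U V C = 0) :
    nuclearNorm (A + C) = nuclearNorm A + nuclearNorm C :=
  stmt14_general A U V σ hU hV hA C hC
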